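/- arXiv:2501.16731 — 6 statements merged into one kernel-verified Lean document; each statement's English description precedes it below -/
import Mathlib

section
/- Let A be a symmetric positive definite matrix, f(x) = (1/2)xᵀAx + bᵀx, and suppose two steepest descent steps with exact line search are taken from x_{k-2}, producing gradients g_{k-2}, g_{k-1}, g_k, all nonzero. Then g_kᵀg_{k-2} > 0. -/
/-!
Each exact line search makes the new gradient orthogonal to the previous one, and for a
quadratic the gradients obey `g₁ = g₀ - α₀ A g₀`, `g₂ = g₁ - α₁ A g₁`. Solving the first
recurrence for `A g₀` and using the symmetry of `A` gives `g₂ ⬝ g₀ = (α₁ / α₀) ‖g₁‖²`,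
which is positive since both step sizes are.
-/

open Matrix

namespace Matrix

variable {n : Type*} [Fintype n]

section CommRing

variable {R : Type*} [CommRing R]

theorem mulVec_sub_smul_add (A : Matrix n n R) (b x d : n → R) (α : R) :
    A *ᵥ (x - α • d) + b = (A *ᵥ x + b) - α • (A *ᵥ d) := by
  rw [mulVec_sub, mulVec_smul]
  abel

theorem IsSymm.mulVec_dotProduct_comm {A : Matrix n n R} (hA : A.IsSymm) (v w : n → R) :
    (A *ᵥ v) ⬝ᵥ w = v ⬝ᵥ (A *ᵥ w) := by
  rw [dotProduct_comm, dotProduct_mulVec, ← mulVec_transpose, hA.eq, dotProduct_comm]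

end CommRing

section Field

variable {K : Type*} [Field K]

theorem sub_smul_mulVec_dotProduct_eq_zero (A : Matrix n n K) {g : n → K} {α : K}
    (hα : α = (g ⬝ᵥ g) / (g ⬝ᵥ (A *ᵥ g))) (hAg : g ⬝ᵥ (A *ᵥ g) ≠ 0) :
    (g - α • (A *ᵥ g)) ⬝ᵥ g = 0 := by
  rw [sub_dotProduct, smul_dotProduct, dotProduct_comm (A *ᵥ g), hα, smul_eq_mul,
    div_mul_cancel₀ _ hAg, sub_self]

theorem dotProduct_two_steps_eq_div_mul {A : Matrix n n K} (hA : A.IsSymm) {g₀ g₁ g₂ : n → K}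
    {α₀ α₁ : K} (hα₀ : α₀ ≠ 0) (hg₁ : g₁ = g₀ - α₀ • (A *ᵥ g₀))
    (hg₂ : g₂ = g₁ - α₁ • (A *ᵥ g₁)) (horth : g₁ ⬝ᵥ g₀ = 0) :
    g₂ ⬝ᵥ g₀ = α₁ / α₀ * (g₁ ⬝ᵥ g₁) := by
  have hAg₀ : A *ᵥ g₀ = α₀⁻¹ • (g₀ - g₁) := by
    rw [hg₁, sub_sub_cancel, smul_smul, inv_mul_cancel₀ hα₀, one_smul]
  rw [hg₂, sub_dotProduct, smul_dotProduct, hA.mulVec_dotProduct_comm, hAg₀, dotProduct_smul,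
    dotProduct_sub, horth, smul_eq_mul, smul_eq_mul]
  ring

end Field

theorem PosDef.div_dotProduct_mulVec_pos {A : Matrix n n ℝ} (hA : A.PosDef) {g : n → ℝ}
    (hg : g ≠ 0) : 0 < (g ⬝ᵥ g) / (g ⬝ᵥ (A *ᵥ g)) := by
  have hgg : 0 < g ⬝ᵥ g := by simpa using dotProduct_star_self_pos_iff.mpr hg
  have hAg : 0 < g ⬝ᵥ (A *ᵥ g) := by simpa using hA.dotProduct_mulVec_pos hg
  positivity

end Matrix

theorem sd_two_steps_gradient_inner_pos_general {n : ℕ}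
    (A : Matrix (Fin n) (Fin n) ℝ) (hA : A.PosDef) (b : Fin n → ℝ)
    (x0 x1 x2 g0 g1 g2 : Fin n → ℝ) (α0 α1 : ℝ)
    (hg0 : g0 = A *ᵥ x0 + b) (hg1 : g1 = A *ᵥ x1 + b) (hg2 : g2 = A *ᵥ x2 + b)
    (hα0 : α0 = (g0 ⬝ᵥ g0) / (g0 ⬝ᵥ (A *ᵥ g0)))
    (hα1 : α1 = (g1 ⬝ᵥ g1) / (g1 ⬝ᵥ (A *ᵥ g1)))
    (hx1 : x1 = x0 - α0 • g0) (hx2 : x2 = x1 - α1 • g1)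
    (h0 : g0 ≠ 0) (h1 : g1 ≠ 0) :
    0 < g2 ⬝ᵥ g0 := by
  have hA_symm : A.IsSymm := by simpa using hA.isHermitian
  have hg1' : g1 = g0 - α0 • (A *ᵥ g0) := by rw [hg1, hx1, mulVec_sub_smul_add, hg0]
  have hg2' : g2 = g1 - α1 • (A *ᵥ g1) := by rw [hg2, hx2, mulVec_sub_smul_add, hg1]
  have hα0_pos : 0 < α0 := hα0 ▸ hA.div_dotProduct_mulVec_pos h0
  have hα1_pos : 0 < α1 := hα1 ▸ hA.div_dotProduct_mulVec_pos h1
  have horth : g1 ⬝ᵥ g0 = 0 := hg1' ▸ sub_smul_mulVec_dotProduct_eq_zero A hα0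
    (by simpa using (hA.dotProduct_mulVec_pos h0).ne')
  rw [dotProduct_two_steps_eq_div_mul hA_symm hα0_pos.ne' hg1' hg2' horth]
  have hg1g1 : 0 < g1 ⬝ᵥ g1 := by simpa using dotProduct_star_self_pos_iff.mpr h1
  positivity

/-- After two exact-line-search steepest descent steps on a strongly convex
quadratic, with all three gradients nonzero, g_kᵀ g_{k-2} > 0. -/
theorem sd_two_steps_gradient_inner_pos {n : ℕ}
    (A : Matrix (Fin n) (Fin n) ℝ) (hA : A.PosDef) (b : Fin n → ℝ)
    (x0 x1 x2 g0 g1 g2 : Fin n → ℝ) (α0 α1 : ℝ)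
    (hg0 : g0 = A *ᵥ x0 + b) (hg1 : g1 = A *ᵥ x1 + b) (hg2 : g2 = A *ᵥ x2 + b)
    (hα0 : α0 = (g0 ⬝ᵥ g0) / (g0 ⬝ᵥ (A *ᵥ g0)))
    (hα1 : α1 = (g1 ⬝ᵥ g1) / (g1 ⬝ᵥ (A *ᵥ g1)))
    (hx1 : x1 = x0 - α0 • g0) (hx2 : x2 = x1 - α1 • g1)
    (h0 : g0 ≠ 0) (h1 : g1 ≠ 0) (h2 : g2 ≠ 0) :
    0 < g2 ⬝ᵥ g0 :=
  sd_two_steps_gradient_inner_pos_general A hA b x0 x1 x2 g0 g1 g2 α0 α1 hg0 hg1 hg2 hα0 hα1 hx1 hx2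
    h0 h1
end

section
/- Under the setting of two consecutive exact-line-search steepest descent steps for a strongly convex quadratic, with gradients g_{k-2}, g_{k-1}, g_k all nonzero and stepsizes α_{k-2}, α_{k-1} > 0, the combined direction p_k = -α_{k-1} g_{k-1} - α_{k-2} g_{k-2} is a descent direction at x_k, i.e. p_kᵀ g_k < 0. -/
open Matrix

/-- The combined TSD direction p_k = -α_{k-1}g_{k-1} - α_{k-2}g_{k-2} is a
descent direction at x_k: p_kᵀ g_k < 0. -/
theorem tsd_combined_direction_descent {n : ℕ}
    (A : Matrix (Fin n) (Fin n) ℝ) (hA : A.PosDef) (b : Fin n → ℝ)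
    (x0 x1 x2 g0 g1 g2 : Fin n → ℝ) (α0 α1 : ℝ)
    (hg0 : g0 = A *ᵥ x0 + b) (hg1 : g1 = A *ᵥ x1 + b) (hg2 : g2 = A *ᵥ x2 + b)
    (hα0 : α0 = (g0 ⬝ᵥ g0) / (g0 ⬝ᵥ (A *ᵥ g0)))
    (hα1 : α1 = (g1 ⬝ᵥ g1) / (g1 ⬝ᵥ (A *ᵥ g1)))
    (hx1 : x1 = x0 - α0 • g0) (hx2 : x2 = x1 - α1 • g1)
    (h0 : g0 ≠ 0) (h1 : g1 ≠ 0) (h2 : g2 ≠ 0)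
    (p : Fin n → ℝ) (hp : p = (-α1) • g1 - α0 • g0) :
    p ⬝ᵥ g2 < 0 := by
  have hsym : Aᵀ = A := hA.isHermitian
  -- symmetry of the bilinear form
  have symm : ∀ u v : Fin n → ℝ, u ⬝ᵥ (A *ᵥ v) = v ⬝ᵥ (A *ᵥ u) := by
    intro u v
    have h := vecMul_transpose A u
    rw [hsym] at h
    rw [dotProduct_mulVec, h, dotProduct_comm]
  -- positivity
  have hd0 : 0 < g0 ⬝ᵥ (A *ᵥ g0) := by
    have := hA.re_dotProduct_pos h0; simpa using this
  have hd1 : 0 < g1 ⬝ᵥ (A *ᵥ g1) := by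
    have := hA.re_dotProduct_pos h1; simpa using this
  have hn0 : 0 < g0 ⬝ᵥ g0 :=
    lt_of_le_of_ne (Finset.sum_nonneg fun i _ => mul_self_nonneg _)
      (Ne.symm (dotProduct_self_eq_zero.not.mpr h0))
  have hn1 : 0 < g1 ⬝ᵥ g1 :=
    lt_of_le_of_ne (Finset.sum_nonneg fun i _ => mul_self_nonneg _)
      (Ne.symm (dotProduct_self_eq_zero.not.mpr h1))
  have hα0pos : 0 < α0 := hα0 ▸ div_pos hn0 hd0
  have hα1pos : 0 < α1 := hα1 ▸ div_pos hn1 hd1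
  -- gradient recursions
  have hg1' : g1 = g0 - α0 • (A *ᵥ g0) := by
    rw [hg1, hx1, mulVec_sub, mulVec_smul, hg0]; abel
  have hg2' : g2 = g1 - α1 • (A *ᵥ g1) := by
    rw [hg2, hx2, mulVec_sub, mulVec_smul, hg1]; abel
  have hα0mul : α0 * (g0 ⬝ᵥ (A *ᵥ g0)) = g0 ⬝ᵥ g0 := by
    rw [hα0, div_mul_cancel₀ _ (ne_of_gt hd0)]
  have hα1mul : α1 * (g1 ⬝ᵥ (A *ᵥ g1)) = g1 ⬝ᵥ g1 := by
    rw [hα1, div_mul_cancel₀ _ (ne_of_gt hd1)]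
  -- orthogonality
  have horth0 : g1 ⬝ᵥ g0 = 0 := by
    rw [hg1', sub_dotProduct, smul_dotProduct, dotProduct_comm (A *ᵥ g0) g0,
      smul_eq_mul, hα0mul, sub_self]
  have horth1 : g2 ⬝ᵥ g1 = 0 := by
    rw [hg2', sub_dotProduct, smul_dotProduct, dotProduct_comm (A *ᵥ g1) g1,
      smul_eq_mul, hα1mul, sub_self]
  -- key identity
  have hkey : α0 * (g1 ⬝ᵥ (A *ᵥ g0)) = -(g1 ⬝ᵥ g1) := by
    have hAg0 : α0 • (A *ᵥ g0) = g0 - g1 := by rw [hg1']; abel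
    calc α0 * (g1 ⬝ᵥ (A *ᵥ g0)) = g1 ⬝ᵥ (α0 • (A *ᵥ g0)) := by
          rw [dotProduct_smul, smul_eq_mul]
      _ = g1 ⬝ᵥ (g0 - g1) := by rw [hAg0]
      _ = g1 ⬝ᵥ g0 - g1 ⬝ᵥ g1 := by rw [dotProduct_sub]
      _ = -(g1 ⬝ᵥ g1) := by rw [horth0, zero_sub]
  -- g0 ⬝ g2
  have hg0g2 : α0 * (g0 ⬝ᵥ g2) = α1 * (g1 ⬝ᵥ g1) := by
    have e1 : g0 ⬝ᵥ g2 = g0 ⬝ᵥ g1 - α1 * (g0 ⬝ᵥ (A *ᵥ g1)) := by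
      rw [hg2', dotProduct_sub, dotProduct_smul, smul_eq_mul]
    have e2 : g0 ⬝ᵥ g1 = 0 := by rw [dotProduct_comm]; exact horth0
    have e3 : g0 ⬝ᵥ (A *ᵥ g1) = g1 ⬝ᵥ (A *ᵥ g0) := symm g0 g1
    rw [e1, e2, e3, zero_sub]
    linear_combination (-α1) * hkey
  have hg0g2pos : 0 < g0 ⬝ᵥ g2 := by
    nlinarith [mul_pos hα1pos hn1]
  have hpg : p ⬝ᵥ g2 = -α1 * (g1 ⬝ᵥ g2) - α0 * (g0 ⬝ᵥ g2) := by
    rw [hp, sub_dotProduct, smul_dotProduct, smul_dotProduct, smul_eq_mul,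
      smul_eq_mul]
  have e4 : g1 ⬝ᵥ g2 = 0 := by rw [dotProduct_comm]; exact horth1
  rw [hpg, e4, mul_zero, zero_sub, neg_lt, neg_zero]
  exact mul_pos hα0pos hg0g2pos
end

section
/- Kantorovich inequality: if A is a symmetric positive definite matrix with smallest eigenvalue λ₁ and largest eigenvalue λₙ, then for every nonzero vector g, (gᵀg)² / ((gᵀAg)(gᵀA⁻¹g)) ≥ 4λ₁λₙ / (λ₁ + λₙ)². -/
open Matrix Set

/-! With `u = A⁻¹ g`, the key estimate is `gᵀAg + λ₁λₙ gᵀA⁻¹g ≤ (λ₁ + λₙ) gᵀg`, the quadratic form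
of `(λₙ - A) A⁻¹ (A - λ₁) ⪰ 0` at `g`; AM–GM then gives
`4 λ₁λₙ (gᵀAg)(gᵀA⁻¹g) ≤ (gᵀAg + λ₁λₙ gᵀA⁻¹g)² ≤ (λ₁ + λₙ)² (gᵀg)²`.
The key estimate needs only the Rayleigh bounds, at the test vectors `g - λₙ u` and `g - λ₁ u`:
their weighted sum is the estimate multiplied by `λₙ - λ₁`, and the case `λ₁ = λₙ` follows by
letting an upper bound `λₙ' > λₙ` decrease to `λₙ`. -/

section

variable {ι : Type*} [Fintype ι]

theorem dotProduct_sub_smul_self (g u : ι → ℝ) (t : ℝ) :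
    (g - t • u) ⬝ᵥ (g - t • u) = g ⬝ᵥ g - 2 * t * (g ⬝ᵥ u) + t ^ 2 * (u ⬝ᵥ u) := by
  simp only [sub_dotProduct, dotProduct_sub, smul_dotProduct, dotProduct_smul, smul_eq_mul,
    dotProduct_comm u g]
  ring

namespace Matrix.IsSymm

variable {A : Matrix ι ι ℝ} {g u : ι → ℝ} {l L : ℝ}

theorem dotProduct_mulVec_sub_smul (hA : A.IsSymm) (hu : A *ᵥ u = g) (t : ℝ) :
    (g - t • u) ⬝ᵥ (A *ᵥ (g - t • u)) = g ⬝ᵥ (A *ᵥ g) - 2 * t * (g ⬝ᵥ g) + t ^ 2 * (g ⬝ᵥ u) := by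
  have hsymm : u ⬝ᵥ (A *ᵥ g) = g ⬝ᵥ g := by
    rw [dotProduct_mulVec, ← hA.eq, vecMul_transpose, hu]
  rw [mulVec_sub, mulVec_smul, hu]
  simp only [sub_dotProduct, dotProduct_sub, smul_dotProduct, dotProduct_smul, smul_eq_mul,
    hsymm, dotProduct_comm u g]
  ring

theorem dotProduct_mulVec_add_mul_le_of_lt (hA : A.IsSymm) (hu : A *ᵥ u = g) (hl : 0 ≤ l)
    (hlL : l < L) (hlow : ∀ v, l * (v ⬝ᵥ v) ≤ v ⬝ᵥ (A *ᵥ v))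
    (hup : ∀ v, v ⬝ᵥ (A *ᵥ v) ≤ L * (v ⬝ᵥ v)) :
    g ⬝ᵥ (A *ᵥ g) + l * L * (g ⬝ᵥ u) ≤ (l + L) * (g ⬝ᵥ g) := by
  have hlow' := hlow (g - L • u)
  have hup' := hup (g - l • u)
  rw [hA.dotProduct_mulVec_sub_smul hu, dotProduct_sub_smul_self] at hlow' hup'
  -- `l` times the slack in `hlow'` plus `L` times that in `hup'` is `L - l` times the goal's slack.
  nlinarith [mul_nonneg hl (sub_nonneg.2 hlow'), mul_nonneg (hl.trans hlL.le) (sub_nonneg.2 hup')]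

theorem dotProduct_mulVec_add_mul_le (hA : A.IsSymm) (hu : A *ᵥ u = g) (hl : 0 ≤ l)
    (hlL : l ≤ L) (hlow : ∀ v, l * (v ⬝ᵥ v) ≤ v ⬝ᵥ (A *ᵥ v))
    (hup : ∀ v, v ⬝ᵥ (A *ᵥ v) ≤ L * (v ⬝ᵥ v)) :
    g ⬝ᵥ (A *ᵥ g) + l * L * (g ⬝ᵥ u) ≤ (l + L) * (g ⬝ᵥ g) := by
  have hL : L ∈ closure (Ioi L) := closure_Ioi L ▸ self_mem_Ici
  refine ContinuousWithinAt.closure_le (f := fun L' ↦ g ⬝ᵥ (A *ᵥ g) + l * L' * (g ⬝ᵥ u))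
    (g := fun L' ↦ (l + L') * (g ⬝ᵥ g)) hL (by fun_prop) (by fun_prop) fun L' hL' ↦ ?_
  refine hA.dotProduct_mulVec_add_mul_le_of_lt hu hl (hlL.trans_lt hL') hlow fun v ↦ ?_
  have hv : 0 ≤ v ⬝ᵥ v := by simpa using dotProduct_self_star_nonneg v
  exact (hup v).trans (mul_le_mul_of_nonneg_right hL'.le hv)

end Matrix.IsSymm

end

theorem four_mul_mul_div_sq_le_of_add_mul_le {a b c l L : ℝ} (ha : 0 < a) (hc : 0 < c)
    (hl : 0 < l) (hL : 0 < L) (h : a + l * L * c ≤ (l + L) * b) :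
    4 * l * L / (l + L) ^ 2 ≤ b ^ 2 / (a * c) := by
  rw [div_le_div_iff₀ (by positivity) (by positivity)]
  calc 4 * l * L * (a * c) ≤ (a + l * L * c) ^ 2 := by nlinarith [sq_nonneg (a - l * L * c)]
    _ ≤ ((l + L) * b) ^ 2 := pow_le_pow_left₀ (by positivity) h 2
    _ = b ^ 2 * (l + L) ^ 2 := by ring

/-- Kantorovich inequality: for a symmetric positive definite matrix whose
eigenvalues lie in [λ₁, λₙ] (expressed through Rayleigh-quotient bounds) and any
nonzero g, (gᵀg)² / ((gᵀAg)(gᵀA⁻¹g)) ≥ 4λ₁λₙ / (λ₁+λₙ)². -/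
theorem kantorovich_inequality {n : ℕ}
    (A : Matrix (Fin n) (Fin n) ℝ) (hA : A.PosDef)
    (lam1 lamn : ℝ) (hlam1 : 0 < lam1) (hle : lam1 ≤ lamn)
    (hR1 : ∀ v : Fin n → ℝ, lam1 * (v ⬝ᵥ v) ≤ v ⬝ᵥ (A *ᵥ v))
    (hRn : ∀ v : Fin n → ℝ, v ⬝ᵥ (A *ᵥ v) ≤ lamn * (v ⬝ᵥ v))
    (g : Fin n → ℝ) (hg : g ≠ 0) :
    4 * lam1 * lamn / (lam1 + lamn) ^ 2
      ≤ (g ⬝ᵥ g) ^ 2 / ((g ⬝ᵥ (A *ᵥ g)) * (g ⬝ᵥ (A⁻¹ *ᵥ g))) := by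
  have hsymm : A.IsSymm := isHermitian_iff_isSymm.1 hA.isHermitian
  have hinv : A *ᵥ (A⁻¹ *ᵥ g) = g := by
    rw [mulVec_mulVec, mul_nonsing_inv _ ((isUnit_iff_isUnit_det A).1 hA.isUnit), one_mulVec]
  have hpos : 0 < g ⬝ᵥ (A *ᵥ g) := by simpa using hA.dotProduct_mulVec_pos hg
  have hpos_inv : 0 < g ⬝ᵥ (A⁻¹ *ᵥ g) := by simpa using hA.inv.dotProduct_mulVec_pos hg
  exact four_mul_mul_div_sq_le_of_add_mul_le hpos hpos_inv hlam1 (hlam1.trans_le hle)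
    (hsymm.dotProduct_mulVec_add_mul_le hinv hlam1.le hle hR1 hRn)
end

section
/- For an exact-line-search steepest descent step on a strongly convex quadratic with Hessian A having condition number κ = λₙ/λ₁, the error contraction in the A-norm satisfies ‖x_{k+1} - x*‖_A ≤ ((κ-1)/(κ+1)) ‖x_k - x*‖_A. -/
/-!
Write `w = x - x*` for the error, so that `g = A w`. With `h = wᵀAw`, `s = gᵀg` and `a = gᵀAg`,
the exact step gives `‖x' - x*‖²_A = h - s²/a`. The Rayleigh bounds yield the Kantorovich-type
inequality `a + λ₁λₙ h ≤ (λ₁ + λₙ) s`, i.e. `wᵀA(A - λ₁)(λₙ - A)w ≥ 0`; together with `4 λ₁λₙ a h ≤ (a + λ₁λₙ h)²` this gives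
`s²/a ≥ 4 λ₁λₙ h / (λ₁ + λₙ)²`, i.e. `h - s²/a ≤ ((λₙ - λ₁)/(λₙ + λ₁))² h`.
-/

open Matrix

theorem sub_sq_div_le_of_kantorovich {lam1 lamn h s a : ℝ} (hlam1 : 0 < lam1) (hle : lam1 ≤ lamn)
    (hh : 0 ≤ h) (ha : 0 < a) (hK : a + lam1 * lamn * h ≤ (lam1 + lamn) * s) :
    h - s ^ 2 / a ≤ ((lamn - lam1) / (lamn + lam1)) ^ 2 * h := by
  have hlamn : 0 < lamn := hlam1.trans_le hle
  have hamgm : 4 * (lam1 * lamn) * h * a ≤ ((lam1 + lamn) * s) ^ 2 :=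
    calc 4 * (lam1 * lamn) * h * a ≤ (a + lam1 * lamn * h) ^ 2 := by
          linarith [sq_nonneg (a - lam1 * lamn * h)]
      _ ≤ ((lam1 + lamn) * s) ^ 2 := pow_le_pow_left₀ (by positivity) hK 2
  have hquot : 4 * (lam1 * lamn) * h / (lamn + lam1) ^ 2 ≤ s ^ 2 / a := by
    rw [div_le_div_iff₀ (by positivity) ha]
    linarith
  calc h - s ^ 2 / a ≤ h - 4 * (lam1 * lamn) * h / (lamn + lam1) ^ 2 := by linarith
    _ = ((lamn - lam1) / (lamn + lam1)) ^ 2 * h := by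
      field_simp
      ring

namespace Matrix

variable {ι : Type*} [Fintype ι] {A : Matrix ι ι ℝ}

theorem IsSymm.dotProduct_mulVec_comm (hA : A.IsSymm) (u v : ι → ℝ) :
    u ⬝ᵥ (A *ᵥ v) = v ⬝ᵥ (A *ᵥ u) := by
  rw [dotProduct_mulVec, ← mulVec_transpose, hA.eq, dotProduct_comm]

theorem IsSymm.quadForm_smul_add_smul_mulVec (hA : A.IsSymm) (w : ι → ℝ) (c d : ℝ) :
    (c • w + d • (A *ᵥ w)) ⬝ᵥ (A *ᵥ (c • w + d • (A *ᵥ w))) =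
      c ^ 2 * (w ⬝ᵥ (A *ᵥ w)) + 2 * c * d * ((A *ᵥ w) ⬝ᵥ (A *ᵥ w)) +
        d ^ 2 * ((A *ᵥ w) ⬝ᵥ (A *ᵥ (A *ᵥ w))) := by
  have hcross : w ⬝ᵥ (A *ᵥ (A *ᵥ w)) = (A *ᵥ w) ⬝ᵥ (A *ᵥ w) :=
    hA.dotProduct_mulVec_comm _ _
  simp only [mulVec_add, mulVec_smul, dotProduct_add, add_dotProduct, dotProduct_smul,
    smul_dotProduct, smul_eq_mul, hcross]
  ring

theorem dotProduct_self_smul_add_smul_mulVec (w : ι → ℝ) (c d : ℝ) :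
    (c • w + d • (A *ᵥ w)) ⬝ᵥ (c • w + d • (A *ᵥ w)) =
      c ^ 2 * (w ⬝ᵥ w) + 2 * c * d * (w ⬝ᵥ (A *ᵥ w)) +
        d ^ 2 * ((A *ᵥ w) ⬝ᵥ (A *ᵥ w)) := by
  simp only [dotProduct_add, add_dotProduct, dotProduct_smul, smul_dotProduct, smul_eq_mul,
    dotProduct_comm (A *ᵥ w) w]
  ring

noncomputable def sdStepSize (A : Matrix ι ι ℝ) (g : ι → ℝ) : ℝ :=
  (g ⬝ᵥ g) / (g ⬝ᵥ (A *ᵥ g))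

variable {lam1 lamn : ℝ}

-- `(λₙ - λ₁) A (A - λ₁) (λₙ - A) = λₙ (A - λ₁) (λₙ - A) (A - λ₁) + λ₁ (λₙ - A) (A - λ₁) (λₙ - A)`,
-- whose two outer forms are `K2` and `K1`.
theorem IsSymm.kantorovich (hA : A.IsSymm) (hlam1 : 0 ≤ lam1) (hle : lam1 ≤ lamn)
    (hR1 : ∀ v : ι → ℝ, lam1 * (v ⬝ᵥ v) ≤ v ⬝ᵥ (A *ᵥ v))
    (hRn : ∀ v : ι → ℝ, v ⬝ᵥ (A *ᵥ v) ≤ lamn * (v ⬝ᵥ v)) (w : ι → ℝ) :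
    (A *ᵥ w) ⬝ᵥ (A *ᵥ (A *ᵥ w)) + lam1 * lamn * (w ⬝ᵥ (A *ᵥ w)) ≤
      (lam1 + lamn) * ((A *ᵥ w) ⬝ᵥ (A *ᵥ w)) := by
  have hquad := hA.quadForm_smul_add_smul_mulVec w
  have hself := dotProduct_self_smul_add_smul_mulVec (A := A) w
  have hlamn : 0 ≤ lamn := hlam1.trans hle
  have K1 := hR1 (lamn • w + (-1 : ℝ) • (A *ᵥ w))
  have K2 := hRn ((-lam1) • w + (1 : ℝ) • (A *ᵥ w))
  rw [hquad, hself] at K1 K2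
  rcases hle.lt_or_eq with hlt | rfl
  · have hscaled : (lamn - lam1) * ((A *ᵥ w) ⬝ᵥ (A *ᵥ (A *ᵥ w)) +
        lam1 * lamn * (w ⬝ᵥ (A *ᵥ w)) - (lam1 + lamn) * ((A *ᵥ w) ⬝ᵥ (A *ᵥ w))) ≤ 0 := by
      linear_combination lamn * K2 + lam1 * K1
    exact sub_nonpos.mp (nonpos_of_mul_nonpos_right hscaled (sub_pos.mpr hlt))
  · linear_combination hRn (A *ᵥ w) + hR1 (A *ᵥ w) / 2 + K2 / 2 + lam1 ^ 2 / 2 * hR1 w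

-- Holds even when `gᵀAg = 0`: then the step size is `0` too, as `x / 0 = 0`.
theorem IsSymm.quadForm_sub_sdStepSize_smul (hA : A.IsSymm) (w : ι → ℝ) :
    (w - A.sdStepSize (A *ᵥ w) • (A *ᵥ w)) ⬝ᵥ (A *ᵥ (w - A.sdStepSize (A *ᵥ w) • (A *ᵥ w))) =
      w ⬝ᵥ (A *ᵥ w) - ((A *ᵥ w) ⬝ᵥ (A *ᵥ w)) ^ 2 / ((A *ᵥ w) ⬝ᵥ (A *ᵥ (A *ᵥ w))) := by
  have hquad := hA.quadForm_smul_add_smul_mulVec w 1 (-A.sdStepSize (A *ᵥ w))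
  rw [one_smul, neg_smul, ← sub_eq_add_neg] at hquad
  rw [hquad, sdStepSize]
  rcases eq_or_ne ((A *ᵥ w) ⬝ᵥ (A *ᵥ (A *ᵥ w))) 0 with ha | ha
  · rw [ha, div_zero, div_zero]
    ring
  · field_simp
    ring

theorem IsSymm.quadForm_sdStep_le (hA : A.IsSymm) (hlam1 : 0 < lam1) (hle : lam1 ≤ lamn)
    (hR1 : ∀ v : ι → ℝ, lam1 * (v ⬝ᵥ v) ≤ v ⬝ᵥ (A *ᵥ v))
    (hRn : ∀ v : ι → ℝ, v ⬝ᵥ (A *ᵥ v) ≤ lamn * (v ⬝ᵥ v)) (w : ι → ℝ) :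
    (w - A.sdStepSize (A *ᵥ w) • (A *ᵥ w)) ⬝ᵥ (A *ᵥ (w - A.sdStepSize (A *ᵥ w) • (A *ᵥ w))) ≤
      ((lamn - lam1) / (lamn + lam1)) ^ 2 * (w ⬝ᵥ (A *ᵥ w)) := by
  rw [hA.quadForm_sub_sdStepSize_smul]
  by_cases hg : A *ᵥ w = 0
  · simp [hg]
  have hs : 0 < (A *ᵥ w) ⬝ᵥ (A *ᵥ w) := by simpa using dotProduct_star_self_pos_iff.mpr hg
  refine sub_sq_div_le_of_kantorovich hlam1 hle ?_ ((mul_pos hlam1 hs).trans_le (hR1 _))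
    (hA.kantorovich hlam1.le hle hR1 hRn w)
  exact (mul_nonneg hlam1.le (by simpa using dotProduct_star_self_nonneg w)).trans (hR1 w)

end Matrix

/-- Error contraction of exact-line-search steepest descent in the A-norm with
factor (κ-1)/(κ+1), κ = λₙ/λ₁. -/
theorem sd_error_contraction {n : ℕ}
    (A : Matrix (Fin n) (Fin n) ℝ) (hA : A.PosDef) (b : Fin n → ℝ)
    (lam1 lamn : ℝ) (hlam1 : 0 < lam1) (hle : lam1 ≤ lamn)
    (hR1 : ∀ v : Fin n → ℝ, lam1 * (v ⬝ᵥ v) ≤ v ⬝ᵥ (A *ᵥ v))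
    (hRn : ∀ v : Fin n → ℝ, v ⬝ᵥ (A *ᵥ v) ≤ lamn * (v ⬝ᵥ v))
    (x g : Fin n → ℝ) (hg : g = A *ᵥ x + b)
    (x' : Fin n → ℝ)
    (hx' : x' = if g = 0 then x else x - ((g ⬝ᵥ g) / (g ⬝ᵥ (A *ᵥ g))) • g)
    (xs : Fin n → ℝ) (hxs : xs = -(A⁻¹ *ᵥ b)) :
    Real.sqrt ((x' - xs) ⬝ᵥ (A *ᵥ (x' - xs)))
      ≤ ((lamn / lam1 - 1) / (lamn / lam1 + 1)) *
          Real.sqrt ((x - xs) ⬝ᵥ (A *ᵥ (x - xs))) := by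
  have hsymm : A.IsSymm := isHermitian_iff_isSymm.mp hA.isHermitian
  have hgerr : g = A *ᵥ (x - xs) := by
    rw [hg, hxs, sub_neg_eq_add, mulVec_add, mulVec_mulVec,
      mul_nonsing_inv _ (isUnit_iff_ne_zero.mpr hA.det_pos.ne'), one_mulVec]
  have hstep : x' - xs = (x - xs) - A.sdStepSize g • g := by
    by_cases hg0 : g = 0
    · simp [hx', hg0]
    · rw [hx', if_neg hg0, sub_right_comm, sdStepSize]
  have hκ : (lamn / lam1 - 1) / (lamn / lam1 + 1) = (lamn - lam1) / (lamn + lam1) := by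
    rw [div_sub_one hlam1.ne', div_add_one hlam1.ne', div_div_div_cancel_right₀ hlam1.ne']
  have hc : 0 ≤ (lamn - lam1) / (lamn + lam1) := div_nonneg (by linarith) (by linarith)
  rw [hstep, hgerr, hκ]
  calc _ ≤ Real.sqrt (((lamn - lam1) / (lamn + lam1)) ^ 2 * ((x - xs) ⬝ᵥ (A *ᵥ (x - xs)))) :=
        Real.sqrt_le_sqrt (hsymm.quadForm_sdStep_le hlam1 hle hR1 hRn (x - xs))
    _ = _ := by rw [Real.sqrt_mul (sq_nonneg _), Real.sqrt_sq hc]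
end

section
/- Under the same abstract recursion (e_{k+1} ≤ q e_k when j ∤ k or k = 0, and e_{k+1} ≤ e_k always, with 0 ≤ q < 1, j ≥ 3), there exists a constant c > 0 such that e_k ≤ c (q^{(j-1)/j})^k for all k ≥ 0; i.e. the sequence converges at least R-linearly with factor q^{(j-1)/j}. -/
/-- Abstract error recursion: R-linear convergence with factor q^{(j-1)/j}. -/
theorem abstract_recursion_r_linear
    (e : ℕ → ℝ) (q : ℝ) (j : ℕ) (hj : 3 ≤ j)
    (hq0 : 0 ≤ q) (hq1 : q < 1)
    (hnn : ∀ k, 0 ≤ e k)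
    (hmono : ∀ k, e (k + 1) ≤ e k)
    (hcon : ∀ k, ¬(k ≠ 0 ∧ j ∣ k) → e (k + 1) ≤ q * e k) :
    ∃ c : ℝ, 0 < c ∧ ∀ k : ℕ, e k ≤ c * (q ^ (((j : ℝ) - 1) / (j : ℝ))) ^ k := by
  have hjR : (0:ℝ) < (j:ℝ) := by
    have : 0 < j := by omega
    exact_mod_cast this
  have hrnn : (0:ℝ) ≤ q ^ (((j : ℝ) - 1) / (j : ℝ)) := Real.rpow_nonneg hq0 _
  rcases eq_or_lt_of_le hq0 with hq | hq
  · -- q = 0 case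
    refine ⟨e 0 + 1, by have := hnn 0; linarith, ?_⟩
    have hz : ∀ k, e (k + 1) ≤ 0 := by
      intro k
      induction k with
      | zero =>
        have h := hcon 0 (by simp)
        simpa [← hq] using h
      | succ n ih => exact le_trans (hmono (n+1)) ih
    intro k
    cases k with
    | zero =>
      have : (q ^ (((j : ℝ) - 1) / (j : ℝ))) ^ 0 = 1 := pow_zero _
      rw [this]
      nlinarith [hnn 0]
    | succ n =>
      have h1 : (0:ℝ) ≤ (e 0 + 1) * (q ^ (((j : ℝ) - 1) / (j : ℝ))) ^ (n+1) := by
        have := hnn 0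
        positivity
      exact le_trans (hz n) h1
  · -- 0 < q
    set m : ℕ → ℕ := fun k => k - (k - 1) / j with hm
    have key : ∀ k, e k ≤ e 0 * q ^ (m k) := by
      intro k
      induction k with
      | zero => simp [hm]
      | succ n ih =>
        by_cases hn : n ≠ 0 ∧ j ∣ n
        · -- non-contracting step: m (n+1) = m n
          obtain ⟨hn0, t, rfl⟩ := hn
          have ht : 1 ≤ t := by
            rcases Nat.eq_zero_or_pos t with h | h
            · subst h; simp at hn0
            · exact h
          obtain ⟨s, rfl⟩ : ∃ s, t = s + 1 := ⟨t - 1, by omega⟩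
          have hdiv1 : (j * (s + 1) - 1) / j = s := by
            have h1 : j * (s + 1) - 1 = (j - 1) + s * j := by
              have e1 : j * (s + 1) = s * j + j := by ring
              omega
            rw [h1, Nat.add_mul_div_right _ _ (by omega : 0 < j),
              Nat.div_eq_of_lt (by omega)]
            omega
          have hdiv2 : (j * (s + 1)) / j = s + 1 :=
            Nat.mul_div_cancel_left _ (by omega)
          have hmeq : m (j * (s + 1) + 1) = m (j * (s + 1)) := by
            simp only [hm]
            rw [Nat.add_sub_cancel, hdiv1, hdiv2]
            have hb : s + 1 ≤ j * (s + 1) := Nat.le_mul_of_pos_left _ (by omega)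
            omega
          rw [hmeq]
          exact le_trans (hmono _) ih
        · -- contracting step
          have hle : m (n + 1) ≤ m n + 1 := by
            simp only [hm, Nat.add_sub_cancel]
            have h1 : (n - 1) / j ≤ n / j := Nat.div_le_div_right (by omega)
            have h2 : n / j ≤ n := Nat.div_le_self _ _
            omega
          have hstep : e (n + 1) ≤ e 0 * q ^ (m n + 1) := by
            have := hcon n hn
            calc e (n + 1) ≤ q * e n := this
              _ ≤ q * (e 0 * q ^ (m n)) := by
                  exact mul_le_mul_of_nonneg_left ih (le_of_lt hq)
              _ = e 0 * q ^ (m n + 1) := by ring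
          refine le_trans hstep ?_
          have hpow : q ^ (m n + 1) ≤ q ^ (m (n + 1)) :=
            pow_le_pow_of_le_one hq0 (le_of_lt hq1) hle
          exact mul_le_mul_of_nonneg_left hpow (hnn 0)
    refine ⟨e 0 + 1, by have := hnn 0; linarith, ?_⟩
    intro k
    have hexp : (k:ℝ) * (((j:ℝ) - 1) / (j:ℝ)) ≤ (m k : ℝ) := by
      have hsub : (k - 1) / j ≤ k := le_trans (Nat.div_le_self _ _) (by omega)
      have hcast : (m k : ℝ) = (k:ℝ) - ((k - 1) / j : ℕ) := by
        simp only [hm]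
        push_cast [Nat.cast_sub hsub]
        ring
      have hd : (((k - 1) / j : ℕ) : ℝ) ≤ (k:ℝ) / (j:ℝ) := by
        have h1 : (((k - 1) / j : ℕ) : ℝ) ≤ ((k - 1 : ℕ):ℝ) / (j:ℝ) :=
          Nat.cast_div_le
        have h2 : ((k - 1 : ℕ):ℝ) ≤ (k:ℝ) := by
          exact_mod_cast Nat.sub_le k 1
        refine le_trans h1 ?_
        gcongr
      have halg : (k:ℝ) * (((j:ℝ) - 1) / (j:ℝ)) = (k:ℝ) - (k:ℝ) / (j:ℝ) := by
        field_simp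
      rw [hcast, halg]
      linarith
    have hpow : q ^ (m k) ≤ (q ^ (((j : ℝ) - 1) / (j : ℝ))) ^ k := by
      rw [← Real.rpow_natCast (q ^ (((j : ℝ) - 1) / (j : ℝ))) k,
        ← Real.rpow_natCast q (m k), ← Real.rpow_mul hq0]
      exact Real.rpow_le_rpow_of_exponent_ge hq (le_of_lt hq1)
        (by rw [mul_comm]; exact hexp)
    calc e k ≤ e 0 * q ^ (m k) := key k
      _ ≤ e 0 * (q ^ (((j : ℝ) - 1) / (j : ℝ))) ^ k :=
          mul_le_mul_of_nonneg_left hpow (hnn 0)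
      _ ≤ (e 0 + 1) * (q ^ (((j : ℝ) - 1) / (j : ℝ))) ^ k := by
          have : (0:ℝ) ≤ (q ^ (((j : ℝ) - 1) / (j : ℝ))) ^ k := by positivity
          nlinarith
end

section
/- The TSD method applied to f(x) = (1/2)xᵀAx + bᵀx with A symmetric positive definite converges at least R-linearly: ‖x_k - x*‖_A ≤ c · (((κ-1)/(κ+1))^{(j-1)/j})^k for some constant c > 0 and all k, where κ = λₙ/λ₁ is the condition number of A and j ≥ 3 is the cycle parameter. -/
/-
The step length `α k` is the exact line search for the energy `E x = ‖x - x*‖²_A` along `p k`, so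
`E` never increases. Every step whose index is not a positive multiple of `j` is a Cauchy step,
and by the Kantorovich inequality it contracts `E` by `q ^ 2`, `q = (κ - 1) / (κ + 1)`. At most
`k / j` of the first `k` steps are not Cauchy steps, hence
`E (x k) ≤ q ^ (2 k (j - 1) / j) E (x 0)`.
-/

open Matrix Finset

lemma le_pow_card_filter_not_mul {E : ℕ → ℝ} {r : ℝ} {P : ℕ → Prop} [DecidablePred P]
    (hr : 0 ≤ r) (hmono : ∀ k, P k → E (k + 1) ≤ E k)
    (hcontr : ∀ k, ¬P k → E (k + 1) ≤ r * E k) (k : ℕ) :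
    E k ≤ r ^ #{i ∈ range k | ¬P i} * E 0 := by
  induction k with
  | zero => simp
  | succ k ih =>
    by_cases hk : P k
    · simpa [range_add_one, filter_insert, hk] using (hmono k hk).trans ih
    · rw [range_add_one, filter_insert, if_pos hk,
        card_insert_of_notMem (by simp), pow_succ', mul_assoc]
      exact (hcontr k hk).trans (mul_le_mul_of_nonneg_left ih hr)

lemma mul_card_filter_multiples_le (j k : ℕ) : j * #{i ∈ range k | i ≠ 0 ∧ j ∣ i} ≤ k := by
  calc j * #{i ∈ range k | i ≠ 0 ∧ j ∣ i}
      ≤ j * #{i ∈ range (k + 1) | i ≠ 0 ∧ j ∣ i} := by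
        gcongr
        omega
    _ = j * (k / j) := by rw [Nat.card_multiples']
    _ ≤ k := Nat.mul_div_le k j

lemma div_mul_le_card_filter_not_multiples (j k : ℕ) :
    ((j : ℝ) - 1) / j * k ≤ #{i ∈ range k | ¬(i ≠ 0 ∧ j ∣ i)} := by
  rcases Nat.eq_zero_or_pos j with rfl | hj
  · simp -- `(0 - 1) / 0 = 0`
  set s := #{i ∈ range k | i ≠ 0 ∧ j ∣ i}
  have hsplit : (s : ℝ) + #{i ∈ range k | ¬(i ≠ 0 ∧ j ∣ i)} = k := by
    exact_mod_cast
      (card_range k ▸ card_filter_add_card_filter_not (s := range k) (fun i => i ≠ 0 ∧ j ∣ i) :)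
  have hcount : (j : ℝ) * s ≤ k := by exact_mod_cast mul_card_filter_multiples_le j k
  rw [div_mul_eq_mul_div, div_le_iff₀ (by exact_mod_cast hj)]
  nlinarith

theorem sqrt_le_of_contraction_off_multiples {E : ℕ → ℝ} {q : ℝ} {j : ℕ} (hq0 : 0 ≤ q)
    (hq1 : q ≤ 1) (hmono : ∀ k, E (k + 1) ≤ E k)
    (hcontr : ∀ k, ¬(k ≠ 0 ∧ j ∣ k) → E (k + 1) ≤ q ^ 2 * E k) (k : ℕ) :
    √(E k) ≤ √(E 0) * (q ^ (((j : ℝ) - 1) / j)) ^ k := by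
  set m := #{i ∈ range k | ¬(i ≠ 0 ∧ j ∣ i)}
  have hexp : 0 ≤ ((j : ℝ) - 1) / j * k := by
    rcases Nat.eq_zero_or_pos j with rfl | hj
    · simp
    · have : (1 : ℝ) ≤ j := by exact_mod_cast hj
      have : (0 : ℝ) ≤ j - 1 := by linarith
      positivity
  have hpow : q ^ m ≤ (q ^ (((j : ℝ) - 1) / j)) ^ k := by
    rw [← Real.rpow_mul_natCast hq0, ← Real.rpow_natCast]
    exact Real.rpow_le_rpow_of_exponent_ge' hq0 hq1 hexp
      (div_mul_le_card_filter_not_multiples j k)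
  calc √(E k) ≤ √((q ^ 2) ^ m * E 0) :=
        Real.sqrt_le_sqrt (le_pow_card_filter_not_mul (sq_nonneg q) (fun k _ => hmono k) hcontr k)
    _ = q ^ m * √(E 0) := by
        rw [← pow_mul, pow_mul', Real.sqrt_mul (by positivity), Real.sqrt_sq (by positivity)]
    _ ≤ √(E 0) * (q ^ (((j : ℝ) - 1) / j)) ^ k := by
        rw [mul_comm]
        gcongr

theorem Finset.kantorovich {ι : Type*} (s : Finset ι) {μ a : ι → ℝ} {l L : ℝ} (hl : 0 ≤ l)
    (hμ : ∀ i ∈ s, μ i ∈ Set.Icc l L) (ha : ∀ i ∈ s, 0 ≤ a i) :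
    4 * l * L * (∑ i ∈ s, μ i ^ 2 * a i) * ∑ i ∈ s, a i ≤
      (l + L) ^ 2 * (∑ i ∈ s, μ i * a i) ^ 2 := by
  set X := ∑ i ∈ s, μ i ^ 2 * a i
  set Y := ∑ i ∈ s, a i
  have hXY : X + l * L * Y = ∑ i ∈ s, (μ i ^ 2 + l * L) * a i := by
    simp only [X, Y, mul_sum, ← sum_add_distrib, add_mul]
  have h0 : 0 ≤ X + l * L * Y := by
    rw [hXY]
    refine sum_nonneg fun i hi => mul_nonneg ?_ (ha i hi)
    have := hμ i hi
    have : 0 ≤ L := hl.trans (this.1.trans this.2)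
    positivity
  -- `(μ - l) (L - μ) ≥ 0` on `[l, L]`
  have hle : X + l * L * Y ≤ (l + L) * ∑ i ∈ s, μ i * a i := by
    rw [hXY, mul_sum]
    refine sum_le_sum fun i hi => ?_
    obtain ⟨hli, hiL⟩ := hμ i hi
    nlinarith [mul_nonneg (mul_nonneg (sub_nonneg.2 hli) (sub_nonneg.2 hiL)) (ha i hi)]
  calc 4 * l * L * X * Y ≤ (X + l * L * Y) ^ 2 := by nlinarith [sq_nonneg (X - l * L * Y)]
    _ ≤ ((l + L) * ∑ i ∈ s, μ i * a i) ^ 2 := pow_le_pow_left₀ h0 hle 2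
    _ = (l + L) ^ 2 * (∑ i ∈ s, μ i * a i) ^ 2 := mul_pow ..

namespace Matrix.IsHermitian

variable {ι : Type*} [Fintype ι] {A : Matrix ι ι ℝ}

lemma dotProduct_mulVec_comm (hA : A.IsHermitian) (u v : ι → ℝ) :
    u ⬝ᵥ (A *ᵥ v) = v ⬝ᵥ (A *ᵥ u) := by
  rw [dotProduct_mulVec, ← mulVec_transpose, ← conjTranspose_eq_transpose_of_trivial, hA.eq,
    dotProduct_comm]

lemma dotProduct_mulVec_add_smul (hA : A.IsHermitian) (e p : ι → ℝ) (t : ℝ) :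
    (e + t • p) ⬝ᵥ (A *ᵥ (e + t • p)) =
      e ⬝ᵥ (A *ᵥ e) + 2 * t * (p ⬝ᵥ (A *ᵥ e)) + t ^ 2 * (p ⬝ᵥ (A *ᵥ p)) := by
  simp only [mulVec_add, mulVec_smul, dotProduct_add, add_dotProduct, dotProduct_smul,
    smul_dotProduct, smul_eq_mul, hA.dotProduct_mulVec_comm e p]
  ring

/-- If `p ⬝ᵥ (A *ᵥ p) = 0`, both `t` and the decrease are `0` by the convention `x / 0 = 0`. -/
theorem dotProduct_mulVec_exact_line_search (hA : A.IsHermitian) (e p : ι → ℝ) {t : ℝ}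
    (ht : t = -(p ⬝ᵥ (A *ᵥ e)) / (p ⬝ᵥ (A *ᵥ p))) :
    (e + t • p) ⬝ᵥ (A *ᵥ (e + t • p)) =
      e ⬝ᵥ (A *ᵥ e) - (p ⬝ᵥ (A *ᵥ e)) ^ 2 / (p ⬝ᵥ (A *ᵥ p)) := by
  rw [hA.dotProduct_mulVec_add_smul, ht]
  rcases eq_or_ne (p ⬝ᵥ (A *ᵥ p)) 0 with hD | hD
  · simp [hD]
  · field_simp
    ring

variable [DecidableEq ι]

lemma star_eigenvectorUnitary_mulVec_mulVec (hA : A.IsHermitian) (v : ι → ℝ) :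
    star (hA.eigenvectorUnitary : Matrix ι ι ℝ) *ᵥ (A *ᵥ v) =
      hA.eigenvalues * (star (hA.eigenvectorUnitary : Matrix ι ι ℝ) *ᵥ v) := by
  set U : Matrix ι ι ℝ := (hA.eigenvectorUnitary : Matrix ι ι ℝ)
  have hdiag : star U * A = diagonal hA.eigenvalues * star U := by
    have h := hA.conjStarAlgAut_star_eigenvectorUnitary
    rw [Unitary.conjStarAlgAut_star_apply] at h
    simpa [mul_assoc, U] using congrArg (· * star U) h
  ext i
  rw [mulVec_mulVec, hdiag, ← mulVec_mulVec, mulVec_diagonal, Pi.mul_apply]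

lemma star_eigenvectorUnitary_mulVec_dotProduct (hA : A.IsHermitian) (v w : ι → ℝ) :
    (star (hA.eigenvectorUnitary : Matrix ι ι ℝ) *ᵥ v) ⬝ᵥ
      (star (hA.eigenvectorUnitary : Matrix ι ι ℝ) *ᵥ w) = v ⬝ᵥ w := by
  set U : Matrix ι ι ℝ := (hA.eigenvectorUnitary : Matrix ι ι ℝ)
  have hU : U * star U = 1 := Unitary.coe_mul_star_self _
  have hUT : (star U)ᵀ = U := by
    rw [star_eq_conjTranspose, conjTranspose_eq_transpose_of_trivial, transpose_transpose]
  rw [dotProduct_mulVec, ← vecMul_transpose, vecMul_vecMul, hUT, hU, vecMul_one]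

lemma eigenvectorBasis_dotProduct_self (hA : A.IsHermitian) (i : ι) :
    ⇑(hA.eigenvectorBasis i) ⬝ᵥ ⇑(hA.eigenvectorBasis i) = 1 := by
  rw [← hA.star_eigenvectorUnitary_mulVec_dotProduct, star_eigenvectorUnitary_mulVec]
  simp

lemma eigenvectorBasis_dotProduct_mulVec (hA : A.IsHermitian) (i : ι) :
    ⇑(hA.eigenvectorBasis i) ⬝ᵥ (A *ᵥ ⇑(hA.eigenvectorBasis i)) = hA.eigenvalues i := by
  rw [mulVec_eigenvectorBasis, dotProduct_smul, eigenvectorBasis_dotProduct_self, smul_eq_mul,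
    mul_one]

lemma le_eigenvalues (hA : A.IsHermitian) {l : ℝ} (h : ∀ v, l * (v ⬝ᵥ v) ≤ v ⬝ᵥ (A *ᵥ v))
    (i : ι) : l ≤ hA.eigenvalues i := by
  simpa [eigenvectorBasis_dotProduct_self, eigenvectorBasis_dotProduct_mulVec]
    using h (hA.eigenvectorBasis i)

lemma eigenvalues_le (hA : A.IsHermitian) {L : ℝ} (h : ∀ v, v ⬝ᵥ (A *ᵥ v) ≤ L * (v ⬝ᵥ v))
    (i : ι) : hA.eigenvalues i ≤ L := by
  simpa [eigenvectorBasis_dotProduct_self, eigenvectorBasis_dotProduct_mulVec]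
    using h (hA.eigenvectorBasis i)

theorem kantorovich (hA : A.IsHermitian) {l L : ℝ} (hl : 0 ≤ l)
    (hR1 : ∀ v, l * (v ⬝ᵥ v) ≤ v ⬝ᵥ (A *ᵥ v)) (hRn : ∀ v, v ⬝ᵥ (A *ᵥ v) ≤ L * (v ⬝ᵥ v))
    (e : ι → ℝ) :
    4 * l * L * ((A *ᵥ e) ⬝ᵥ (A *ᵥ (A *ᵥ e))) * (e ⬝ᵥ (A *ᵥ e)) ≤
      (l + L) ^ 2 * ((A *ᵥ e) ⬝ᵥ (A *ᵥ e)) ^ 2 := by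
  set μ := hA.eigenvalues
  set c := star (hA.eigenvectorUnitary : Matrix ι ι ℝ) *ᵥ e
  have hbound : ∀ i, μ i ∈ Set.Icc l L := fun i =>
    ⟨hA.le_eigenvalues hR1 i, hA.eigenvalues_le hRn i⟩
  rw [← hA.star_eigenvectorUnitary_mulVec_dotProduct (A *ᵥ e),
    ← hA.star_eigenvectorUnitary_mulVec_dotProduct e,
    ← hA.star_eigenvectorUnitary_mulVec_dotProduct (A *ᵥ e) (A *ᵥ e)]
  simp only [star_eigenvectorUnitary_mulVec_mulVec]
  convert Finset.kantorovich univ (a := fun i => μ i * c i ^ 2) hl (fun i _ => hbound i)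
    (fun i _ => mul_nonneg (hl.trans (hbound i).1) (sq_nonneg _)) using 3 <;>
  simp only [dotProduct, Pi.mul_apply] <;> exact sum_congr rfl fun i _ => by ring

theorem steepest_descent_contraction (hA : A.IsHermitian) {l L : ℝ} (hl : 0 < l) (hlL : l ≤ L)
    (hR1 : ∀ v, l * (v ⬝ᵥ v) ≤ v ⬝ᵥ (A *ᵥ v)) (hRn : ∀ v, v ⬝ᵥ (A *ᵥ v) ≤ L * (v ⬝ᵥ v))
    (e : ι → ℝ) :
    e ⬝ᵥ (A *ᵥ e) - ((A *ᵥ e) ⬝ᵥ (A *ᵥ e)) ^ 2 / ((A *ᵥ e) ⬝ᵥ (A *ᵥ (A *ᵥ e))) ≤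
      ((L - l) / (L + l)) ^ 2 * (e ⬝ᵥ (A *ᵥ e)) := by
  have hK := hA.kantorovich hl.le hR1 hRn e
  set g := A *ᵥ e
  have hG : 0 ≤ g ⬝ᵥ g := sum_nonneg fun i _ => mul_self_nonneg (g i)
  have hD : l * (g ⬝ᵥ g) ≤ g ⬝ᵥ (A *ᵥ g) := hR1 g
  rcases (mul_nonneg hl.le hG).trans hD |>.eq_or_lt with hD0 | hD0
  · have hg : g = 0 := dotProduct_self_eq_zero.1 <| le_antisymm
      (nonpos_of_mul_nonpos_right (hD0 ▸ hD) hl) hG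
    simp [hg]
  · have hsum : 0 < l + L := by linarith
    have h : 4 * l * L * (e ⬝ᵥ g) / (l + L) ^ 2 ≤ (g ⬝ᵥ g) ^ 2 / (g ⬝ᵥ (A *ᵥ g)) := by
      rw [div_le_div_iff₀ (by positivity) hD0]
      linarith
    calc e ⬝ᵥ g - (g ⬝ᵥ g) ^ 2 / (g ⬝ᵥ (A *ᵥ g))
        ≤ e ⬝ᵥ g - 4 * l * L * (e ⬝ᵥ g) / (l + L) ^ 2 := by linarith
      _ = ((L - l) / (L + l)) ^ 2 * (e ⬝ᵥ g) := by
          have : L + l ≠ 0 := by linarith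
          field_simp
          ring

end Matrix.IsHermitian

theorem tsd_r_linear_convergence_general {n : ℕ}
    (A : Matrix (Fin n) (Fin n) ℝ) (hA : A.PosDef) (b : Fin n → ℝ)
    (lam1 lamn : ℝ) (hlam1 : 0 < lam1) (hle : lam1 ≤ lamn)
    (hR1 : ∀ v : Fin n → ℝ, lam1 * (v ⬝ᵥ v) ≤ v ⬝ᵥ (A *ᵥ v))
    (hRn : ∀ v : Fin n → ℝ, v ⬝ᵥ (A *ᵥ v) ≤ lamn * (v ⬝ᵥ v))
    (j : ℕ)
    (x g p : ℕ → Fin n → ℝ) (α : ℕ → ℝ)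
    (xs : Fin n → ℝ) (hxs : xs = -(A⁻¹ *ᵥ b))
    (hg : ∀ k, g k = A *ᵥ x k + b)
    (hp : ∀ k, p k = if k ≠ 0 ∧ j ∣ k
      then (-(α (k - 1))) • g (k - 1) - (α (k - 2)) • g (k - 2) else -(g k))
    (hα : ∀ k, α k = -(p k ⬝ᵥ g k) / (p k ⬝ᵥ (A *ᵥ p k)))
    (hstep : ∀ k, x (k + 1) = if g k = 0 then x k else x k + α k • p k) :
    ∃ c : ℝ, 0 < c ∧ ∀ k : ℕ,
      Real.sqrt ((x k - xs) ⬝ᵥ (A *ᵥ (x k - xs)))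
        ≤ c * ((((lamn / lam1 - 1) / (lamn / lam1 + 1)) ^
            (((j : ℝ) - 1) / (j : ℝ))) ^ k) := by
  have hgE : ∀ k, g k = A *ᵥ (x k - xs) := fun k => by
    rw [hg, mulVec_sub, hxs, mulVec_neg, mulVec_mulVec, mul_nonsing_inv _ hA.det_pos.ne'.isUnit,
      one_mulVec, sub_neg_eq_add]
  set E : ℕ → ℝ := fun k => (x k - xs) ⬝ᵥ (A *ᵥ (x k - xs))
  have hE : ∀ k, E (k + 1) = E k - (p k ⬝ᵥ g k) ^ 2 / (p k ⬝ᵥ (A *ᵥ p k)) := fun k => by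
    by_cases h0 : g k = 0
    · simp [E, hstep k, h0]
    · simp only [E, hstep k, if_neg h0]
      rw [add_sub_right_comm, hgE k]
      exact hA.isHermitian.dotProduct_mulVec_exact_line_search _ _ (hgE k ▸ hα k)
  have hmono : ∀ k, E (k + 1) ≤ E k := fun k => by
    rw [hE]
    exact sub_le_self _ (div_nonneg (sq_nonneg _) (hA.posSemidef.dotProduct_mulVec_nonneg (p k)))
  set q := (lamn - lam1) / (lamn + lam1)
  have hcauchy : ∀ k, ¬(k ≠ 0 ∧ j ∣ k) → E (k + 1) ≤ q ^ 2 * E k := fun k hk => by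
    rw [hE, hp, if_neg hk, neg_dotProduct, neg_sq, mulVec_neg, neg_dotProduct, dotProduct_neg,
      neg_neg, hgE]
    exact hA.isHermitian.steepest_descent_contraction hlam1 hle hR1 hRn (x k - xs)
  have hq0 : 0 ≤ q := div_nonneg (by linarith) (by linarith)
  have hbase : (lamn / lam1 - 1) / (lamn / lam1 + 1) = q := by
    simp only [q]
    field_simp
  refine ⟨√(E 0) + 1, by positivity, fun k => ?_⟩
  rw [hbase]
  calc √(E k) ≤ √(E 0) * (q ^ (((j : ℝ) - 1) / j)) ^ k :=
        sqrt_le_of_contraction_off_multiples hq0 (div_le_one_of_le₀ (by linarith) (by linarith))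
          hmono hcauchy k
    _ ≤ (√(E 0) + 1) * (q ^ (((j : ℝ) - 1) / j)) ^ k :=
        mul_le_mul_of_nonneg_right (by linarith) (pow_nonneg (Real.rpow_nonneg hq0 _) _)

/-- The TSD method is at least R-linearly convergent with factor
((κ-1)/(κ+1))^{(j-1)/j}, κ = λₙ/λ₁ the condition number of A. -/
theorem tsd_r_linear_convergence {n : ℕ}
    (A : Matrix (Fin n) (Fin n) ℝ) (hA : A.PosDef) (b : Fin n → ℝ)
    (lam1 lamn : ℝ) (hlam1 : 0 < lam1) (hle : lam1 ≤ lamn)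
    (hR1 : ∀ v : Fin n → ℝ, lam1 * (v ⬝ᵥ v) ≤ v ⬝ᵥ (A *ᵥ v))
    (hRn : ∀ v : Fin n → ℝ, v ⬝ᵥ (A *ᵥ v) ≤ lamn * (v ⬝ᵥ v))
    (j : ℕ) (hj : 3 ≤ j)
    (x g p : ℕ → Fin n → ℝ) (α : ℕ → ℝ)
    (xs : Fin n → ℝ) (hxs : xs = -(A⁻¹ *ᵥ b))
    (hg : ∀ k, g k = A *ᵥ x k + b)
    (hp : ∀ k, p k = if k ≠ 0 ∧ j ∣ k
      then (-(α (k - 1))) • g (k - 1) - (α (k - 2)) • g (k - 2) else -(g k))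
    (hα : ∀ k, α k = -(p k ⬝ᵥ g k) / (p k ⬝ᵥ (A *ᵥ p k)))
    (hstep : ∀ k, x (k + 1) = if g k = 0 then x k else x k + α k • p k) :
    ∃ c : ℝ, 0 < c ∧ ∀ k : ℕ,
      Real.sqrt ((x k - xs) ⬝ᵥ (A *ᵥ (x k - xs)))
        ≤ c * ((((lamn / lam1 - 1) / (lamn / lam1 + 1)) ^
            (((j : ℝ) - 1) / (j : ℝ))) ^ k) :=
  tsd_r_linear_convergence_general A hA b lam1 lamn hlam1 hle hR1 hRn j x g p α xs hxs hg hp hα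
    hstep
end
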